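/- arXiv:2411.16756 — 2 statements merged into one kernel-verified Lean document; each statement's English description precedes it below -/
import Mathlib

section
/- Let r ≥ 2, let v be an infinite word over {1_1,...,1_r,2} with π(v) > 0, and β ∈ (0,1] such that the Martin-boundary measures μ_{r,v,β} on YF^r and μ_{s(v),β} on YF exist (as limits of d_r(ε,w)·d_r(w,v_n)/d_r(ε,v_n) along sequences v_n → v with π(v_n) → β·π(v)). Then for every word u over {1,2}: ∑_{w : s(w)=u} μ_{r,v,β}(w) = μ_{s(v),β}(u). -/
open Filter

/-- Words over {1,2}: `true` encodes the digit 2, `false` encodes the digit 1. -/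
abbrev W := List Bool

/-- Digit sum of a word. -/
def dsum (x : W) : ℕ := (x.map fun c => if c then 2 else 1).sum

/-- Downward edge relation in the Young–Fibonacci graph `YF`:
either delete the leftmost 1, or replace a 2 lying to the left of the leftmost 1 by a 1. -/
def down (x y : W) : Prop :=
  (∃ p s, (∀ c ∈ p, c = true) ∧ x = p ++ false :: s ∧ y = p ++ s) ∨
  (∃ p s, (∀ c ∈ p, c = true) ∧ x = p ++ true :: s ∧ y = p ++ false :: s)

/-- `d1 w v` = number of saturated decreasing paths from `v` down to `w` in `YF`. -/
noncomputable def d1 (w v : W) : ℕ :=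
  Nat.card {L : List W // List.Chain down v L ∧ (v :: L).getLast (List.cons_ne_nil _ _) = w}

/-- Symbols of `YF^r`: `none` encodes 2, `some i` encodes the indexed one `1_i`. -/
abbrev SymR (r : ℕ) := Option (Fin r)

/-- Downward edge relation in `YF^r`. -/
def downR {r : ℕ} (x y : List (SymR r)) : Prop :=
  (∃ (p s : List (SymR r)) (i : Fin r), (∀ c ∈ p, c = none) ∧ x = p ++ some i :: s ∧ y = p ++ s) ∨
  (∃ (p s : List (SymR r)) (i : Fin r), (∀ c ∈ p, c = none) ∧ x = p ++ none :: s ∧ y = p ++ some i :: s)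

/-- Number of saturated decreasing paths from `v` down to `w` in `YF^r`. -/
noncomputable def dR {r : ℕ} (w v : List (SymR r)) : ℕ :=
  Nat.card {L : List (List (SymR r)) //
    List.Chain downR v L ∧ (v :: L).getLast (List.cons_ne_nil _ _) = w}

/-- The index-forgetting map `s : YF^r → YF`. -/
def forget {r : ℕ} (x : List (SymR r)) : W := x.map fun c => c.isNone

/-- Index (0-based, from the head) of the `k`-th `true` in a list (`k ≥ 1`); junk if absent. -/
def idxTrue : List Bool → ℕ → ℕ
  | [], _ => 0
  | false :: xs, k => idxTrue xs k + 1
  | true :: xs, k => if k ≤ 1 then 0 else idxTrue xs (k - 1) + 1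

/-- `gv x k = β₀ + ⋯ + β_{k-1} + 2k - 1` where the `βᵢ` are the blocks of 1's of `x`
read from the right; equivalently (number of symbols to the right of the k-th 2) + k. -/
def gv (x : W) (k : ℕ) : ℕ := idxTrue x.reverse k + k

/-- `pik x i = ∏_{j : gv x j > i} (gv x j - i) / gv x j`. -/
noncomputable def pik (x : W) (i : ℕ) : ℝ :=
  ∏ j ∈ Finset.Icc 1 (x.count true),
    if i < gv x j then ((gv x j : ℝ) - i) / gv x j else 1

/-- `π(x) = ∏_{j : gv x j > 1} (gv x j - 1)/gv x j`. -/
noncomputable def piW (x : W) : ℝ := pik x 1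

/-- Number of 2's among the first `t+1` symbols (from the right) of a left-infinite word. -/
def twoCount (v : ℕ → Bool) (t : ℕ) : ℕ := ((Finset.range (t + 1)).filter fun s => v s = true).card

/-- `gInf v k`: for a left-infinite word `v` (position 0 = rightmost symbol),
the position of the `k`-th 2 from the right plus `k`. -/
noncomputable def gInf (v : ℕ → Bool) (k : ℕ) : ℕ := sInf {t | k ≤ twoCount v t} + k

open Classical in
/-- `pikInf v i = ∏_{j : gInf v j > i} (gInf v j - i)/gInf v j` for a left-infinite word. -/
noncomputable def pikInf (v : ℕ → Bool) (i : ℕ) : ℝ :=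
  ∏' j : ℕ,
    if 1 ≤ j ∧ (∃ t, j ≤ twoCount v t) ∧ i < gInf v j then
      ((gInf v j : ℝ) - i) / gInf v j
    else 1

noncomputable def piInf (v : ℕ → Bool) : ℝ := pikInf v 1


/-! ## Auxiliary machinery -/
section aux


section generic

variable {α : Type*} {R : α → α → Prop} {f : α → ℕ}

noncomputable def pcount (R : α → α → Prop) (w v : α) : ℕ :=
  Nat.card {L : List α // List.Chain R v L ∧ (v :: L).getLast (List.cons_ne_nil _ _) = w}

lemma last_lt (hf : ∀ x y, R x y → f y < f x) :
    ∀ (L : List α) (v : α), List.Chain R v L → L ≠ [] →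
      f ((v :: L).getLast (List.cons_ne_nil _ _)) < f v := by
  intro L
  induction L with
  | nil => intro v _ h; exact absurd rfl h
  | cons a L ih =>
    intro v hc _
    rcases List.chain_cons.mp hc with ⟨hva, hc'⟩
    rcases eq_or_ne L [] with rfl | hL
    · simpa using hf _ _ hva
    · rw [List.getLast_cons (List.cons_ne_nil _ _)]
      exact (ih a hc' hL).trans (hf _ _ hva)

lemma path_nil (hf : ∀ x y, R x y → f y < f x) {v : α} {L : List α}
    (hc : List.Chain R v L) (hl : (v :: L).getLast (List.cons_ne_nil _ _) = v) : L = [] := by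
  by_contra h
  have := last_lt hf L v hc h
  rw [hl] at this
  omega

lemma pcount_self (hf : ∀ x y, R x y → f y < f x) (v : α) : pcount R v v = 1 := by
  have : Unique {L : List α // List.Chain R v L ∧ (v :: L).getLast (List.cons_ne_nil _ _) = v} :=
    { default := ⟨[], List.Chain.nil, rfl⟩
      uniq := fun L => Subtype.ext (path_nil hf L.2.1 L.2.2) }
  exact Nat.card_unique

lemma pcount_eq_zero (hf : ∀ x y, R x y → f y < f x) {v w : α}
    (hvw : v ≠ w) (hle : f v ≤ f w) : pcount R w v = 0 := by
  have : IsEmpty {L : List α // List.Chain R v L ∧ (v :: L).getLast (List.cons_ne_nil _ _) = w} := by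
    constructor
    rintro ⟨L, hc, hl⟩
    rcases eq_or_ne L [] with rfl | hL
    · exact hvw hl
    · have := last_lt hf L v hc hL
      rw [hl] at this
      omega
  exact Nat.card_of_isEmpty

/-- The type of paths from `v` to `w`. -/
abbrev PathT (R : α → α → Prop) (v w : α) :=
  {L : List α // List.Chain R v L ∧ (v :: L).getLast (List.cons_ne_nil _ _) = w}

def glue (v w : α) (S : Finset α) (hS : ∀ y, y ∈ S ↔ R v y) :
    (Σ y : {y // y ∈ S}, PathT R y.1 w) → PathT R v w :=
  fun p => ⟨p.1.1 :: p.2.1,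
    List.chain_cons.mpr ⟨(hS _).mp p.1.2, p.2.2.1⟩,
    by rw [List.getLast_cons (List.cons_ne_nil _ _)]; exact p.2.2.2⟩

lemma glue_bijective (v w : α) (hvw : v ≠ w) (S : Finset α) (hS : ∀ y, y ∈ S ↔ R v y) :
    Function.Bijective (glue v w S hS) := by
  constructor
  · rintro ⟨⟨y, hy⟩, ⟨L, hL⟩⟩ ⟨⟨y', hy'⟩, ⟨L', hL'⟩⟩ h
    simp only [glue, Subtype.mk.injEq, List.cons.injEq] at h
    obtain ⟨rfl, rfl⟩ := h
    rfl
  · rintro ⟨L, hc, hl⟩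
    match L, hc, hl with
    | [], _, hl => exact absurd hl hvw
    | a :: L, hc, hl =>
      rcases List.chain_cons.mp hc with ⟨hva, hc'⟩
      refine ⟨⟨⟨a, (hS a).mpr hva⟩, ⟨L, hc', ?_⟩⟩, rfl⟩
      rw [← hl, List.getLast_cons (List.cons_ne_nil _ _)]

lemma path_finite (hf : ∀ x y, R x y → f y < f x)
    (hs : ∀ x, ∃ S : Finset α, ∀ y, y ∈ S ↔ R x y) :
    ∀ (n : ℕ) (v w : α), f v ≤ n → Finite (PathT R v w) := by
  intro n
  induction n with
  | zero =>
    intro v w hv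
    rcases eq_or_ne v w with rfl | hvw
    · have : Unique (PathT R v v) :=
        { default := ⟨[], List.Chain.nil, rfl⟩
          uniq := fun L => Subtype.ext (path_nil hf L.2.1 L.2.2) }
      infer_instance
    · obtain ⟨S, hS⟩ := hs v
      haveI : ∀ y : {y // y ∈ S}, Finite (PathT R y.1 w) := fun y =>
        absurd (hf _ _ ((hS _).mp y.2)) (by omega)
      exact Finite.of_surjective _ (glue_bijective v w hvw S hS).2
  | succ n ih =>
    intro v w hv
    rcases eq_or_ne v w with rfl | hvw
    · have : Unique (PathT R v v) :=
        { default := ⟨[], List.Chain.nil, rfl⟩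
          uniq := fun L => Subtype.ext (path_nil hf L.2.1 L.2.2) }
      infer_instance
    · obtain ⟨S, hS⟩ := hs v
      haveI : ∀ y : {y // y ∈ S}, Finite (PathT R y.1 w) := fun y =>
        ih y.1 w (by have := hf _ _ ((hS _).mp y.2); omega)
      exact Finite.of_surjective _ (glue_bijective v w hvw S hS).2

lemma pcount_rec (hf : ∀ x y, R x y → f y < f x)
    (hs : ∀ x, ∃ S : Finset α, ∀ y, y ∈ S ↔ R x y)
    {v w : α} (hvw : v ≠ w) (S : Finset α) (hS : ∀ y, y ∈ S ↔ R v y) :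
    pcount R w v = ∑ y ∈ S, pcount R w y := by
  haveI h1 : ∀ y : {y // y ∈ S}, Finite (PathT R y.1 w) := fun y =>
    path_finite hf hs (f y.1) y.1 w le_rfl
  haveI h2 : ∀ y : {y // y ∈ S}, Fintype (PathT R y.1 w) := fun y => Fintype.ofFinite _
  have hcard : pcount R w v = Nat.card (Σ y : {y // y ∈ S}, PathT R y.1 w) :=
    (Nat.card_eq_of_bijective _ (glue_bijective v w hvw S hS)).symm
  rw [hcard, Nat.card_eq_fintype_card, Fintype.card_sigma]
  rw [← Finset.sum_coe_sort S (fun y => pcount R w y)]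
  refine Finset.sum_congr rfl fun y _ => ?_
  rw [pcount, Nat.card_eq_fintype_card]

end generic


lemma down_nil (y : W) : ¬ down [] y := by
  rintro (⟨p, s, _, hx, _⟩ | ⟨p, s, _, hx, _⟩) <;> simp at hx

lemma down_cons_false (s y : W) : down (false :: s) y ↔ y = s := by
  constructor
  · rintro (⟨p, s', hp, hx, hy⟩ | ⟨p, s', hp, hx, hy⟩)
    · cases p with
      | nil =>
        simp only [List.nil_append] at hx hy
        injection hx with _ h2
        subst h2
        exact hy
      | cons b p =>
        have hb : b = true := hp b (by simp)
        simp [hb] at hx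
    · cases p with
      | nil => simp at hx
      | cons b p =>
        have hb : b = true := hp b (by simp)
        simp [hb] at hx
  · rintro rfl
    exact Or.inl ⟨[], y, by simp, rfl, rfl⟩

lemma down_cons_true (s y : W) :
    down (true :: s) y ↔ y = false :: s ∨ ∃ y', y = true :: y' ∧ down s y' := by
  constructor
  · rintro (⟨p, s', hp, hx, hy⟩ | ⟨p, s', hp, hx, hy⟩)
    · cases p with
      | nil => simp at hx
      | cons b p =>
        simp only [List.cons_append, List.cons.injEq] at hx hy ⊢
        refine Or.inr ⟨p ++ s', by simp [hy, ← hx.1], Or.inl ⟨p, s', fun c hc => hp c (by simp [hc]), hx.2, rfl⟩⟩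
    · cases p with
      | nil =>
        simp only [List.nil_append, List.cons.injEq] at hx
        exact Or.inl (by simp [hy, hx.2])
      | cons b p =>
        simp only [List.cons_append, List.cons.injEq] at hx hy ⊢
        exact Or.inr ⟨p ++ false :: s', by simp [hy, ← hx.1], Or.inr ⟨p, s', fun c hc => hp c (by simp [hc]), hx.2, rfl⟩⟩
  · rintro (rfl | ⟨y', rfl, (⟨p, s', hp, hx, hy⟩ | ⟨p, s', hp, hx, hy⟩)⟩)
    · exact Or.inr ⟨[], s, by simp, rfl, rfl⟩
    · exact Or.inl ⟨true :: p, s', by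
        intro c hc
        rcases List.mem_cons.mp hc with rfl | hc
        · rfl
        · exact hp c hc,
        by simp [hx], by simp [hy]⟩
    · exact Or.inr ⟨true :: p, s', by
        intro c hc
        rcases List.mem_cons.mp hc with rfl | hc
        · rfl
        · exact hp c hc,
        by simp [hx], by simp [hy]⟩

/-! ### downR : cons characterization -/

lemma downR_nil {r : ℕ} (y : List (SymR r)) : ¬ downR [] y := by
  rintro (⟨p, s, i, _, hx, _⟩ | ⟨p, s, i, _, hx, _⟩) <;> simp at hx

lemma downR_cons_some {r : ℕ} (i : Fin r) (s y : List (SymR r)) :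
    downR (some i :: s) y ↔ y = s := by
  constructor
  · rintro (⟨p, s', j, hp, hx, hy⟩ | ⟨p, s', j, hp, hx, hy⟩)
    · cases p with
      | nil =>
        simp only [List.nil_append] at hx hy
        injection hx with _ h2
        subst h2
        exact hy
      | cons b p =>
        have hb : b = none := hp b (by simp)
        simp [hb] at hx
    · cases p with
      | nil => simp at hx
      | cons b p =>
        have hb : b = none := hp b (by simp)
        simp [hb] at hx
  · rintro rfl
    exact Or.inl ⟨[], y, i, by simp, rfl, rfl⟩

lemma downR_cons_none {r : ℕ} (s y : List (SymR r)) :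
    downR (none :: s) y ↔ (∃ i : Fin r, y = some i :: s) ∨ ∃ y', y = none :: y' ∧ downR s y' := by
  constructor
  · rintro (⟨p, s', j, hp, hx, hy⟩ | ⟨p, s', j, hp, hx, hy⟩)
    · cases p with
      | nil => simp at hx
      | cons b p =>
        simp only [List.cons_append, List.cons.injEq] at hx hy ⊢
        exact Or.inr ⟨p ++ s', by simp [hy, ← hx.1],
          Or.inl ⟨p, s', j, fun c hc => hp c (by simp [hc]), hx.2, rfl⟩⟩
    · cases p with
      | nil =>
        simp only [List.nil_append, List.cons.injEq] at hx
        exact Or.inl ⟨j, by simp [hy, hx.2]⟩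
      | cons b p =>
        simp only [List.cons_append, List.cons.injEq] at hx hy ⊢
        exact Or.inr ⟨p ++ some j :: s', by simp [hy, ← hx.1],
          Or.inr ⟨p, s', j, fun c hc => hp c (by simp [hc]), hx.2, rfl⟩⟩
  · rintro (⟨i, rfl⟩ | ⟨y', rfl, (⟨p, s', j, hp, hx, hy⟩ | ⟨p, s', j, hp, hx, hy⟩)⟩)
    · exact Or.inr ⟨[], s, i, by simp, rfl, rfl⟩
    · exact Or.inl ⟨none :: p, s', j, by
        intro c hc
        rcases List.mem_cons.mp hc with rfl | hc
        · rfl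
        · exact hp c hc,
        by simp [hx], by simp [hy]⟩
    · exact Or.inr ⟨none :: p, s', j, by
        intro c hc
        rcases List.mem_cons.mp hc with rfl | hc
        · rfl
        · exact hp c hc,
        by simp [hx], by simp [hy]⟩

/-! ### successor lists -/

def succ1L : W → List W
  | [] => []
  | false :: s => [s]
  | true :: s => (false :: s) :: (succ1L s).map (true :: ·)

def succRL (r : ℕ) : List (SymR r) → List (List (SymR r))
  | [] => []
  | some _ :: s => [s]
  | none :: s => ((List.finRange r).map fun i => some i :: s) ++ (succRL r s).map (none :: ·)

lemma down_iff : ∀ x y : W, down x y ↔ y ∈ succ1L x := by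
  intro x
  induction x with
  | nil => intro y; simp [succ1L, down_nil]
  | cons a s ih =>
    intro y
    cases a with
    | false => simp [succ1L, down_cons_false]
    | true =>
      rw [down_cons_true, succ1L]
      simp only [List.mem_cons, List.mem_map]
      constructor
      · rintro (rfl | ⟨y', rfl, h⟩)
        · exact Or.inl rfl
        · exact Or.inr ⟨y', (ih y').mp h, rfl⟩
      · rintro (rfl | ⟨y', h, rfl⟩)
        · exact Or.inl rfl
        · exact Or.inr ⟨y', rfl, (ih y').mpr h⟩

lemma downR_iff {r : ℕ} : ∀ x y : List (SymR r), downR x y ↔ y ∈ succRL r x := by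
  intro x
  induction x with
  | nil => intro y; simp [succRL, downR_nil]
  | cons a s ih =>
    intro y
    cases a with
    | some i => simp [succRL, downR_cons_some]
    | none =>
      rw [downR_cons_none, succRL]
      simp only [List.mem_append, List.mem_map, List.mem_finRange]
      constructor
      · rintro (⟨i, rfl⟩ | ⟨y', rfl, h⟩)
        · exact Or.inl ⟨i, trivial, rfl⟩
        · exact Or.inr ⟨y', (ih y').mp h, rfl⟩
      · rintro (⟨i, -, rfl⟩ | ⟨y', h, rfl⟩)
        · exact Or.inl ⟨i, rfl⟩
        · exact Or.inr ⟨y', rfl, (ih y').mpr h⟩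

/-! ### Nodup -/

lemma succ1L_nodup : ∀ x : W, (succ1L x).Nodup := by
  intro x
  induction x with
  | nil => simp [succ1L]
  | cons a s ih =>
    cases a with
    | false => simp [succ1L]
    | true =>
      rw [succ1L]
      refine List.Nodup.cons ?_ (ih.map fun _ _ h => by simpa using h)
      simp only [List.mem_map]
      rintro ⟨y', _, h⟩
      simp at h

lemma succRL_nodup {r : ℕ} : ∀ x : List (SymR r), (succRL r x).Nodup := by
  intro x
  induction x with
  | nil => simp [succRL]
  | cons a s ih =>
    cases a with
    | some i => simp [succRL]
    | none =>
      rw [succRL]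
      refine List.Nodup.append ?_ (ih.map fun _ _ h => by simpa using h) ?_
      · exact (List.nodup_finRange r).map fun _ _ h => by simpa using h
      · intro y h1 h2
        simp only [List.mem_map, List.mem_finRange] at h1 h2
        obtain ⟨i, -, rfl⟩ := h1
        obtain ⟨y', _, h⟩ := h2
        simp at h

/-! ### measure decrease -/

lemma dsum_cons (b : Bool) (l : W) : dsum (b :: l) = (if b then 2 else 1) + dsum l := by
  simp [dsum]

lemma succ1L_dsum : ∀ x y : W, y ∈ succ1L x → dsum y < dsum x := by
  intro x
  induction x with
  | nil => intro y h; simp [succ1L] at h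
  | cons a s ih =>
    intro y h
    cases a with
    | false =>
      simp only [succ1L, List.mem_singleton] at h
      subst h
      simp [dsum_cons]
    | true =>
      rw [succ1L] at h
      rcases List.mem_cons.mp h with rfl | h
      · simp [dsum_cons]
      · obtain ⟨y', hy', rfl⟩ := List.mem_map.mp h
        have := ih y' hy'
        simp only [dsum_cons]
        omega

lemma forget_cons {r : ℕ} (a : SymR r) (s : List (SymR r)) :
    forget (a :: s) = a.isNone :: forget s := rfl

lemma succRL_dsum {r : ℕ} : ∀ x y : List (SymR r), y ∈ succRL r x →
    dsum (forget y) < dsum (forget x) := by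
  intro x
  induction x with
  | nil => intro y h; simp [succRL] at h
  | cons a s ih =>
    intro y h
    cases a with
    | some i =>
      simp only [succRL, List.mem_singleton] at h
      subst h
      simp [forget_cons, dsum_cons]
    | none =>
      rw [succRL] at h
      rcases List.mem_append.mp h with h | h
      · obtain ⟨i, _, rfl⟩ := List.mem_map.mp h
        simp [forget_cons, dsum_cons]
      · obtain ⟨y', hy', rfl⟩ := List.mem_map.mp h
        have := ih y' hy'
        simp only [forget_cons, dsum_cons, Option.isNone_none]
        omega

lemma down_dsum {x y : W} (h : down x y) : dsum y < dsum x :=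
  succ1L_dsum x y ((down_iff x y).mp h)

lemma downR_dsum {r : ℕ} {x y : List (SymR r)} (h : downR x y) :
    dsum (forget y) < dsum (forget x) :=
  succRL_dsum x y ((downR_iff x y).mp h)


def fiberL (r : ℕ) : W → List (List (SymR r))
  | [] => [[]]
  | true :: u => (fiberL r u).map (none :: ·)
  | false :: u => (fiberL r u).flatMap fun l => (List.finRange r).map fun i => some i :: l

lemma mem_fiberL {r : ℕ} : ∀ (u : W) (w : List (SymR r)), w ∈ fiberL r u ↔ forget w = u := by
  intro u
  induction u with
  | nil =>
    intro w
    simp [fiberL, forget, List.map_eq_nil_iff]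
  | cons a u ih =>
    intro w
    cases a with
    | true =>
      cases w with
      | nil => simp [fiberL, forget]
      | cons b w =>
        simp only [fiberL, List.mem_map, forget_cons, List.cons.injEq]
        constructor
        · rintro ⟨w', hw', rfl, rfl⟩
          exact ⟨rfl, (ih w').mp hw'⟩
        · rintro ⟨h1, h2⟩
          have hb : b = none := by cases b <;> simp_all
          exact ⟨w, (ih w).mpr h2, by rw [hb], rfl⟩
    | false =>
      cases w with
      | nil => simp [fiberL, forget]
      | cons b w =>
        simp only [fiberL, List.mem_flatMap, List.mem_map, List.mem_finRange, forget_cons,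
          List.cons.injEq]
        constructor
        · rintro ⟨w', hw', i, -, rfl, rfl⟩
          exact ⟨rfl, (ih w').mp hw'⟩
        · rintro ⟨h1, h2⟩
          obtain ⟨i, rfl⟩ : ∃ i, b = some i := by cases b <;> simp_all
          exact ⟨w, (ih w).mpr h2, i, trivial, rfl, rfl⟩

/-! ### the local sum identity -/

lemma sum_succ (r : ℕ) : ∀ (x : List (SymR r)) (G : W → ℕ),
    ((succRL r x).map fun y => r ^ (forget y).count true * G (forget y)).sum
      = r ^ (forget x).count true * ((succ1L (forget x)).map G).sum := by
  intro x
  induction x with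
  | nil => intro G; simp [succRL, forget, succ1L]
  | cons a s ih =>
    intro G
    cases a with
    | some i =>
      simp [succRL, forget_cons, succ1L, List.count_cons, forget]
    | none =>
      have hfx : forget (none :: s) = true :: forget s := rfl
      rw [succRL, hfx, succ1L]
      rw [List.map_append, List.sum_append, List.map_map, List.map_map]
      have h1 : (((List.finRange r).map
          ((fun y => r ^ (forget y).count true * G (forget y)) ∘ fun i => some i :: s))).sum
          = r * (r ^ (forget s).count true * G (false :: forget s)) := by
        have : ((fun y => r ^ (forget y).count true * G (forget y)) ∘ fun i : Fin r => some i :: s)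
            = fun _ => r ^ (forget s).count true * G (false :: forget s) := by
          funext i
          simp [forget_cons, List.count_cons]
        rw [this, List.map_const', List.sum_replicate, List.length_finRange, smul_eq_mul]
      have h2 : ((succRL r s).map
          ((fun y => r ^ (forget y).count true * G (forget y)) ∘ (none :: ·))).sum
          = r * (r ^ (forget s).count true * ((succ1L (forget s)).map fun Y => G (true :: Y)).sum) := by
        have hcomp : ((fun y => r ^ (forget y).count true * G (forget y)) ∘ (none :: ·))
            = fun y : List (SymR r) => r * (r ^ (forget y).count true * G (true :: forget y)) := by
          funext y
          simp [forget_cons, List.count_cons, pow_succ]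
          ring
        rw [hcomp, List.sum_map_mul_left, ih (fun Y => G (true :: Y))]
      rw [h1, h2]
      simp only [List.map_cons, List.sum_cons, List.map_map, List.count_cons]
      ring_nf
      simp [pow_succ, Function.comp_def]
      ring

/-! ### the key identity -/

def fiberS (r : ℕ) (u : W) : Finset (List (SymR r)) := (fiberL r u).toFinset

lemma mem_fiberS {r : ℕ} {u : W} {w : List (SymR r)} :
    w ∈ fiberS r u ↔ forget w = u := by
  rw [fiberS, List.mem_toFinset, mem_fiberL]

lemma dR_pcount {r : ℕ} (w v : List (SymR r)) : dR w v = pcount downR w v := rfl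

lemma d1_pcount (w v : W) : d1 w v = pcount down w v := rfl

lemma hfR {r : ℕ} : ∀ x y : List (SymR r), downR x y → dsum (forget y) < dsum (forget x) :=
  fun _ _ => downR_dsum

lemma hf1 : ∀ x y : W, down x y → dsum y < dsum x := fun _ _ => down_dsum

lemma hsR {r : ℕ} : ∀ x : List (SymR r), ∃ S : Finset (List (SymR r)), ∀ y, y ∈ S ↔ downR x y :=
  fun x => ⟨(succRL r x).toFinset, fun y => by rw [List.mem_toFinset, ← downR_iff]⟩

lemma hs1 : ∀ x : W, ∃ S : Finset W, ∀ y, y ∈ S ↔ down x y :=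
  fun x => ⟨(succ1L x).toFinset, fun y => by rw [List.mem_toFinset, ← down_iff]⟩

lemma key_step (r : ℕ) (u : W) (v : List (SymR r))
    (ih : ∀ y : List (SymR r), dsum (forget y) < dsum (forget v) →
      r ^ u.count true * ∑ w ∈ fiberS r u, dR w y
        = r ^ (forget y).count true * d1 u (forget y)) :
    r ^ u.count true * ∑ w ∈ fiberS r u, dR w v
      = r ^ (forget v).count true * d1 u (forget v) := by
  by_cases hvu : forget v = u
  · have h1 : d1 u (forget v) = 1 := by
      rw [hvu, d1_pcount]
      exact pcount_self (f := dsum) hf1 u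
    have h2 : ∑ w ∈ fiberS r u, dR w v = 1 := by
      rw [Finset.sum_eq_single_of_mem v (mem_fiberS.mpr hvu)]
      · rw [dR_pcount]
        exact pcount_self (f := fun x => dsum (forget x)) hfR v
      · intro w hw hne
        rw [dR_pcount]
        refine pcount_eq_zero (f := fun x => dsum (forget x)) hfR (fun h => hne (h.symm)) ?_
        show dsum (forget v) ≤ dsum (forget w)
        rw [mem_fiberS.mp hw, hvu]
    rw [h1, h2, hvu]
  · rcases le_or_gt (dsum (forget v)) (dsum u) with hle | hlt
    · have h1 : d1 u (forget v) = 0 := by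
        rw [d1_pcount]
        exact pcount_eq_zero (f := dsum) hf1 hvu hle
      have h2 : ∑ w ∈ fiberS r u, dR w v = 0 := Finset.sum_eq_zero fun w hw => by
        have hwu := mem_fiberS.mp hw
        rw [dR_pcount]
        refine pcount_eq_zero (f := fun x => dsum (forget x)) hfR ?_ ?_
        · rintro rfl; exact hvu hwu
        · show dsum (forget v) ≤ dsum (forget w)
          rw [hwu]; exact hle
      rw [h1, h2]
      ring
    · have hvne : ∀ w ∈ fiberS r u, v ≠ w := by
        rintro w hw rfl
        rw [mem_fiberS.mp hw] at hlt
        omega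
      have hTmem : ∀ y : List (SymR r), y ∈ (succRL r v).toFinset ↔ downR v y := fun y => by
        rw [List.mem_toFinset, ← downR_iff]
      have hrecR : ∀ w ∈ fiberS r u, dR w v = ∑ y ∈ (succRL r v).toFinset, dR w y := by
        intro w hw
        rw [dR_pcount, pcount_rec hfR hsR (hvne w hw) _ hTmem]
        rfl
      have hvu' : forget v ≠ u := hvu
      have hrec1 : d1 u (forget v) = ∑ Y ∈ (succ1L (forget v)).toFinset, d1 u Y := by
        rw [d1_pcount, pcount_rec hf1 hs1 hvu' _ (fun Y => by rw [List.mem_toFinset, ← down_iff])]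
        rfl
      calc r ^ u.count true * ∑ w ∈ fiberS r u, dR w v
          = r ^ u.count true * ∑ w ∈ fiberS r u, ∑ y ∈ (succRL r v).toFinset, dR w y := by
            rw [Finset.sum_congr rfl hrecR]
        _ = ∑ y ∈ (succRL r v).toFinset, r ^ u.count true * ∑ w ∈ fiberS r u, dR w y := by
            rw [Finset.sum_comm, Finset.mul_sum]
        _ = ∑ y ∈ (succRL r v).toFinset, r ^ (forget y).count true * d1 u (forget y) := by
            refine Finset.sum_congr rfl fun y hy => ?_
            exact ih y (succRL_dsum v y (List.mem_toFinset.mp hy))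
        _ = ((succRL r v).map fun y => r ^ (forget y).count true * d1 u (forget y)).sum := by
            rw [List.sum_toFinset _ (succRL_nodup v)]
        _ = r ^ (forget v).count true * ((succ1L (forget v)).map (d1 u)).sum := by
            rw [sum_succ]
        _ = r ^ (forget v).count true * ∑ Y ∈ (succ1L (forget v)).toFinset, d1 u Y := by
            rw [List.sum_toFinset _ (succ1L_nodup (forget v))]
        _ = r ^ (forget v).count true * d1 u (forget v) := by rw [← hrec1]

lemma keyN (r : ℕ) (u : W) : ∀ (n : ℕ) (v : List (SymR r)), dsum (forget v) ≤ n →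
    r ^ u.count true * ∑ w ∈ fiberS r u, dR w v
      = r ^ (forget v).count true * d1 u (forget v) := by
  intro n
  induction n with
  | zero =>
    intro v hv
    exact key_step r u v fun y hy => absurd (hy.trans_le hv) (Nat.not_lt_zero _)
  | succ n ih =>
    intro v hv
    exact key_step r u v fun y hy => ih y (by omega)

lemma key (r : ℕ) (u : W) (v : List (SymR r)) :
    r ^ u.count true * ∑ w ∈ fiberS r u, dR w v
      = r ^ (forget v).count true * d1 u (forget v) :=
  keyN r u _ v le_rfl

end aux

/-- Disintegration of the Martin boundary measures of `YF^r` over those of `YF`: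
`∑_{w : s(w) = u} μ_{r,v,β}(w) = μ_{s(v),β}(u)`. -/
theorem stmt15 (r : ℕ) (hr : 2 ≤ r) (v : ℕ → SymR r)
    (hv : 0 < piInf (fun n => (v n).isNone)) (β : ℝ) (hβ : β ∈ Set.Ioc (0 : ℝ) 1)
    (vs : ℕ → List (SymR r))
    (hconv : ∀ j : ℕ, ∀ᶠ n in atTop, (vs n).reverse[j]? = some (v j))
    (hpi : Tendsto (fun n => piW (forget (vs n))) atTop
      (nhds (β * piInf (fun n => (v n).isNone))))
    (μr : List (SymR r) → ℝ) (μ1 : W → ℝ)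
    (hμr : ∀ w : List (SymR r),
      Tendsto (fun n => (dR [] w : ℝ) * (dR w (vs n) : ℝ) / (dR [] (vs n) : ℝ)) atTop (nhds (μr w)))
    (hμ1 : ∀ u : W,
      Tendsto (fun n => (d1 [] u : ℝ) * (d1 u (forget (vs n)) : ℝ) / (d1 [] (forget (vs n)) : ℝ))
        atTop (nhds (μ1 u)))
    (u : W) :
    ∑' w : {w : List (SymR r) // forget w = u}, μr w.1 = μ1 u := by

    classical
    have hfinset : ({w : List (SymR r) | forget w = u}).Finite :=
      Set.Finite.subset (List.finite_toSet (fiberL r u)) (fun w hw => (mem_fiberL u w).mpr hw)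
    haveI : Finite {w : List (SymR r) // forget w = u} := hfinset.to_subtype
    haveI : Fintype {w : List (SymR r) // forget w = u} := Fintype.ofFinite _
    have htsum : ∑' w : {w : List (SymR r) // forget w = u}, μr w.1 = ∑ w ∈ fiberS r u, μr w := by
      rw [tsum_fintype]
      exact (Finset.sum_subtype (fiberS r u) (fun w => mem_fiberS) μr).symm
    have hrne : ((r : ℝ)) ≠ 0 := by
      have : (0 : ℕ) < r := by omega
      exact_mod_cast this.ne'
    have hEq : ∀ n, ∑ w ∈ fiberS r u, ((dR [] w : ℝ) * (dR w (vs n) : ℝ) / (dR [] (vs n) : ℝ))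
        = (d1 [] u : ℝ) * (d1 u (forget (vs n)) : ℝ) / (d1 [] (forget (vs n)) : ℝ) := by
      intro n
      have k0 : (dR ([] : List (SymR r)) (vs n) : ℝ)
          = (r : ℝ) ^ (forget (vs n)).count true * (d1 [] (forget (vs n)) : ℝ) := by
        have h := key r [] (vs n)
        simp only [fiberS, fiberL, List.toFinset_cons, List.toFinset_nil,
          insert_empty_eq, Finset.sum_singleton, List.count_nil, pow_zero, one_mul] at h
        exact_mod_cast congrArg (Nat.cast : ℕ → ℝ) h
      have k0w : ∀ w ∈ fiberS r u,
          (dR ([] : List (SymR r)) w : ℝ) = (r : ℝ) ^ u.count true * (d1 [] u : ℝ) := by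
        intro w hw
        have h := key r [] w
        rw [mem_fiberS.mp hw] at h
        simp only [fiberS, fiberL, List.toFinset_cons, List.toFinset_nil,
          insert_empty_eq, Finset.sum_singleton, List.count_nil, pow_zero, one_mul] at h
        exact_mod_cast congrArg (Nat.cast : ℕ → ℝ) h
      have ku : (r : ℝ) ^ u.count true * (∑ w ∈ fiberS r u, (dR w (vs n) : ℝ))
          = (r : ℝ) ^ (forget (vs n)).count true * (d1 u (forget (vs n)) : ℝ) := by
        have h := congrArg (Nat.cast : ℕ → ℝ) (key r u (vs n))
        push_cast at h
        exact h
      have hpow : ((r : ℝ) ^ (forget (vs n)).count true) ≠ 0 := pow_ne_zero _ hrne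
      calc ∑ w ∈ fiberS r u, ((dR [] w : ℝ) * (dR w (vs n) : ℝ) / (dR [] (vs n) : ℝ))
          = ∑ w ∈ fiberS r u, ((r : ℝ) ^ u.count true * (d1 [] u : ℝ)) * (dR w (vs n) : ℝ)
              / ((r : ℝ) ^ (forget (vs n)).count true * (d1 [] (forget (vs n)) : ℝ)) := by
            refine Finset.sum_congr rfl fun w hw => ?_
            rw [k0w w hw, k0]
        _ = ((r : ℝ) ^ u.count true * (d1 [] u : ℝ)) * (∑ w ∈ fiberS r u, (dR w (vs n) : ℝ))
              / ((r : ℝ) ^ (forget (vs n)).count true * (d1 [] (forget (vs n)) : ℝ)) := by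
            rw [← Finset.sum_div, ← Finset.mul_sum]
        _ = (d1 [] u : ℝ) * ((r : ℝ) ^ u.count true * ∑ w ∈ fiberS r u, (dR w (vs n) : ℝ))
              / ((r : ℝ) ^ (forget (vs n)).count true * (d1 [] (forget (vs n)) : ℝ)) := by
            ring
        _ = (d1 [] u : ℝ) * ((r : ℝ) ^ (forget (vs n)).count true * (d1 u (forget (vs n)) : ℝ))
              / ((r : ℝ) ^ (forget (vs n)).count true * (d1 [] (forget (vs n)) : ℝ)) := by
            rw [ku]
        _ = (d1 [] u : ℝ) * ((d1 u (forget (vs n)) : ℝ) / (d1 [] (forget (vs n)) : ℝ)) := by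
            rw [mul_div_assoc, mul_div_mul_left _ _ hpow]
        _ = (d1 [] u : ℝ) * (d1 u (forget (vs n)) : ℝ) / (d1 [] (forget (vs n)) : ℝ) :=
            (mul_div_assoc _ _ _).symm
    have h2 : Tendsto (fun n => ∑ w ∈ fiberS r u,
          ((dR [] w : ℝ) * (dR w (vs n) : ℝ) / (dR [] (vs n) : ℝ))) atTop
        (nhds (∑ w ∈ fiberS r u, μr w)) :=
      tendsto_finset_sum _ fun w _ => hμr w
    have h3 : Tendsto (fun n => (d1 [] u : ℝ) * (d1 u (forget (vs n)) : ℝ)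
          / (d1 [] (forget (vs n)) : ℝ)) atTop (nhds (∑ w ∈ fiberS r u, μr w)) := by
      have := funext hEq
      rwa [this] at h2
    rw [htsum]
    exact tendsto_nhds_unique h3 (hμ1 u)
end

section
/- Let r ≥ 2, let v be a left-infinite word over {1_1,...,1_r,2} with π(v) > 0, let β ∈ (0,1] and ε > 0. Then lim_{m→∞} ∑_{w} μ_{r,w,β}(v) = 0, where the sum is over all vertices w of YF^r of digit sum m with π(w) ∉ (π(v)(β-ε), π(v)(β+ε)), assuming the corresponding one-dimensional statement (for r = 1) that lim_{m→∞} ∑_{u ∈ R̄(1, s(v), β, m, ε)} μ_{s(v),β}(u) = 0. -/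
open Filter

section paths
variable {α : Type*} (R : List α → List α → Prop) (μ : List α → ℕ)

def pth (x w : List α) :=
  {L : List (List α) // List.Chain R x L ∧ (x :: L).getLast (List.cons_ne_nil _ _) = w}

variable (hμ : ∀ x y, R x y → μ y + 1 = μ x)

include hμ in
lemma chain_last_meas : ∀ {x : List α} {L}, List.Chain R x L →
    μ ((x :: L).getLast (List.cons_ne_nil _ _)) + L.length = μ x := by
  intro x L
  induction L generalizing x with
  | nil => intro _; simp
  | cons y L ih =>
    intro hc
    rw [List.Chain, List.chain_cons] at hc
    have h1 := ih hc.2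
    have h2 := hμ _ _ hc.1
    rw [List.getLast_cons (List.cons_ne_nil _ _)]
    simp only [List.length_cons]
    omega

include hμ in
lemma pth_nil_of_meas_eq {x w : List α} (h : μ w = μ x) :
    ∀ P : pth R x w, P.1 = [] := by
  rintro ⟨L, hc, hl⟩
  cases L with
  | nil => rfl
  | cons y L =>
    exfalso
    have := chain_last_meas R μ hμ hc
    rw [hl] at this
    simp only [List.length_cons] at this
    omega

open Classical in
include hμ in
lemma card_pth_meas_eq {x w : List α} (h : μ w = μ x) :
    Nat.card (pth R x w) = if w = x then 1 else 0 := by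
  have key := pth_nil_of_meas_eq R μ hμ h
  split_ifs with hw
  · subst hw
    rw [Nat.card_eq_one_iff_unique]
    refine ⟨⟨fun P Q => Subtype.ext ((key P).trans (key Q).symm)⟩, ⟨⟨[], List.Chain.nil, rfl⟩⟩⟩
  · rw [Nat.card_eq_zero]
    left
    constructor
    rintro ⟨L, hc, hl⟩
    have hL : L = [] := key ⟨L, hc, hl⟩
    subst hL
    exact hw (by simpa using hl.symm)

def pthEquivSigma {x w : List α} (hxw : x ≠ w) :
    pth R x w ≃ Σ y : {y // R x y}, pth R y.1 w where
  toFun P :=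
    match P with
    | ⟨[], _, hl⟩ => absurd (by simpa using hl) hxw
    | ⟨y :: L, hc, hl⟩ =>
      ⟨⟨y, (List.chain_cons.mp hc).1⟩, L, (List.chain_cons.mp hc).2,
        by rw [← hl, List.getLast_cons (List.cons_ne_nil _ _)]⟩
  invFun P :=
    match P with
    | ⟨⟨y, hy⟩, ⟨L, hc, hl⟩⟩ => ⟨y :: L, List.chain_cons.mpr ⟨hy, hc⟩,
        by rw [List.getLast_cons (List.cons_ne_nil _ _)]; exact hl⟩
  left_inv P := by
    match P with
    | ⟨[], _, hl⟩ => exact absurd (by simpa using hl) hxw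
    | ⟨y :: L, hc, hl⟩ => rfl
  right_inv P := by
    match P with
    | ⟨⟨y, hy⟩, ⟨L, hc, hl⟩⟩ => rfl

variable [Finite α]

lemma succ_finite (hlen : ∀ x y, R x y → y.length ≤ x.length) (x : List α) :
    Finite {y // R x y} := by
  have : Finite {l : List α // l.length ≤ x.length} :=
    (List.finite_length_le α x.length).to_subtype
  exact Finite.of_injective
    (fun y : {y // R x y} => (⟨y.1, hlen _ _ y.2⟩ : {l : List α // l.length ≤ x.length}))
    (fun a b h => by cases a; cases b; simpa [Subtype.ext_iff] using h)

include hμ in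
lemma pth_finite (hlen : ∀ x y, R x y → y.length ≤ x.length) :
    ∀ x w, Finite (pth R x w) := by
  have main : ∀ n x, μ x = n → ∀ w, Finite (pth R x w) := by
    intro n
    induction n using Nat.strong_induction_on with
    | _ n IH =>
    intro x hn w
    by_cases hxw : x = w
    · subst hxw
      have : Subsingleton (pth R x x) := by
        constructor
        intro P Q
        exact Subtype.ext ((pth_nil_of_meas_eq R μ hμ rfl P).trans
          (pth_nil_of_meas_eq R μ hμ rfl Q).symm)
      exact Finite.of_subsingleton
    · haveI : Finite {y // R x y} := succ_finite R hlen x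
      haveI : ∀ y : {y // R x y}, Finite (pth R y.1 w) := by
        rintro ⟨y, hy⟩
        have hlt := hμ _ _ hy
        exact IH (μ y) (by omega) y rfl w
      exact Finite.of_equiv _ (pthEquivSigma R hxw).symm
  exact fun x w => main (μ x) x rfl w

lemma natCard_sigma {ι : Type*} [Fintype ι] (f : ι → Type*) [∀ i, Finite (f i)] :
    Nat.card (Σ i, f i) = ∑ i, Nat.card (f i) := by
  letI : ∀ i, Fintype (f i) := fun i => Fintype.ofFinite _
  simp [Nat.card_eq_fintype_card, Fintype.card_sigma]

include hμ in
lemma card_pth_succ (hlen : ∀ x y, R x y → y.length ≤ x.length)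
    {x w : List α} (hxw : x ≠ w) (S : Finset (List α)) (hS : ∀ y, y ∈ S ↔ R x y) :
    Nat.card (pth R x w) = ∑ y ∈ S, Nat.card (pth R y w) := by
  haveI : Finite {y // R x y} := succ_finite R hlen x
  haveI : ∀ y : {y // R x y}, Finite (pth R y.1 w) := fun y => pth_finite R μ hμ hlen y.1 w
  rw [Nat.card_congr (pthEquivSigma R hxw)]
  letI : Fintype {y // R x y} := Fintype.ofFinite _
  rw [natCard_sigma]
  rw [← Finset.sum_coe_sort S (fun y => Nat.card (pth R y w))]
  exact Fintype.sum_equiv (Equiv.subtypeEquivRight (fun y => (hS y))).symm _ _ (fun y => rfl)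

end paths

section lead
variable {α : Type*} (p : α → Bool)

/-- length of the maximal all-`p` prefix -/
def leadP (l : List α) : ℕ := (l.takeWhile p).length

lemma leadP_le_length (l : List α) : leadP p l ≤ l.length :=
  (l.takeWhile_sublist p).length_le

lemma getElem_lt_leadP {l : List α} {k : ℕ} (hk : k < leadP p l)
    (hk' : k < l.length) : p l[k] = true := by
  have h1 : l[k] = (l.takeWhile p)[k] :=
    (List.getElem_of_eq (List.takeWhile_append_dropWhile (p := p) (l := l)).symm _).trans
      (List.getElem_append_left hk)
  rw [h1]
  exact List.mem_takeWhile_imp (List.getElem_mem hk)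

lemma getElem_leadP {l : List α} (h : leadP p l < l.length) :
    p l[leadP p l] = false := by
  have hne : l.dropWhile p ≠ [] := by
    intro hc
    have := List.takeWhile_append_dropWhile (p := p) (l := l)
    rw [hc, List.append_nil] at this
    rw [leadP, this] at h
    omega
  have e1 : (l.takeWhile p ++ l.dropWhile p)[leadP p l]? = l[leadP p l]? :=
    congrArg (fun t => t[leadP p l]?) (List.takeWhile_append_dropWhile (p := p) (l := l))
  have e2 : (l.takeWhile p ++ l.dropWhile p)[leadP p l]? = (l.dropWhile p)[0]? := by
    rw [List.getElem?_append_right (show (l.takeWhile p).length ≤ leadP p l from le_refl _)]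
    congr 1
    simp [leadP]
  have e3 : (l.dropWhile p)[0]? = some ((l.dropWhile p).head hne) := by
    rw [List.getElem?_eq_getElem (by simpa using List.length_pos_iff.mpr hne)]
    congr 1
    exact List.getElem_zero _
  have e4 : l[leadP p l]? = some l[leadP p l] := List.getElem?_eq_getElem h
  have h1 : l[leadP p l] = (l.dropWhile p).head hne :=
    Option.some.inj ((e4.symm.trans (e1.symm.trans (e2.trans e3))))
  rw [h1]
  exact List.head_dropWhile_not p hne

lemma leadP_decomp_false {q s : List α} {a : α} (hq : ∀ c ∈ q, p c = true)
    (ha : p a = false) : leadP p (q ++ a :: s) = q.length := by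
  induction q with
  | nil => simp [leadP, List.takeWhile_cons, ha]
  | cons c q ih =>
    have hc : p c = true := hq c (by simp)
    simp only [List.cons_append, leadP, List.takeWhile_cons, hc, if_true, List.length_cons]
    have := ih (fun c hc' => hq c (by simp [hc']))
    rw [leadP] at this
    omega

lemma leadP_decomp_true {q s : List α} {a : α} (hq : ∀ c ∈ q, p c = true)
    (ha : p a = true) : q.length < leadP p (q ++ a :: s) := by
  induction q with
  | nil => simp [leadP, List.takeWhile_cons, ha]
  | cons c q ih =>
    have hc : p c = true := hq c (by simp)
    simp only [List.cons_append, leadP, List.takeWhile_cons, hc, if_true, List.length_cons]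
    have := ih (fun c hc' => hq c (by simp [hc']))
    rw [leadP] at this
    omega

lemma take_leadP_all {l : List α} {k : ℕ} (hk : k ≤ leadP p l) :
    ∀ c ∈ l.take k, p c = true := by
  intro c hc
  obtain ⟨i, hi, rfl⟩ := List.getElem_of_mem hc
  have hik : i < k := by simp [List.length_take] at hi; omega
  have hil : i < l.length := by simp [List.length_take] at hi; omega
  rw [List.getElem_take]
  exact getElem_lt_leadP p (lt_of_lt_of_le hik hk) hil

/-- decomposition at index k -/
lemma decomp_at (l : List α) {k : ℕ} (hk : k < l.length) :
    l = l.take k ++ l[k] :: l.drop (k + 1) := by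
  conv_lhs => rw [← List.take_append_drop k l]
  rw [List.drop_eq_getElem_cons hk]

lemma set_decomp (l : List α) {k : ℕ} (hk : k < l.length) (a : α) :
    l.set k a = l.take k ++ a :: l.drop (k + 1) := by
  rw [List.set_eq_take_append_cons_drop]
  simp [hk]

lemma eraseIdx_decomp (l : List α) (k : ℕ) :
    l.eraseIdx k = l.take k ++ l.drop (k + 1) := List.eraseIdx_eq_take_drop_succ l k

end lead
section specific
open List

variable {r : ℕ}

lemma hmeas1 : ∀ x y : W, down x y → dsum y + 1 = dsum x := by
  rintro x y (⟨p, s, hp, rfl, rfl⟩ | ⟨p, s, hp, rfl, rfl⟩) <;>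
    (simp [dsum, List.map_append, List.sum_append]; omega)

lemma hmeasR : ∀ x y : List (SymR r), downR x y →
    dsum (forget y) + 1 = dsum (forget x) := by
  rintro x y (⟨p, s, i, hp, rfl, rfl⟩ | ⟨p, s, i, hp, rfl, rfl⟩) <;>
    (simp [dsum, forget, List.map_append, List.sum_append]; omega)

lemma hlen1 : ∀ x y : W, down x y → y.length ≤ x.length := by
  rintro x y (⟨p, s, hp, rfl, rfl⟩ | ⟨p, s, hp, rfl, rfl⟩) <;> simp

lemma hlenR : ∀ x y : List (SymR r), downR x y → y.length ≤ x.length := by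
  rintro x y (⟨p, s, i, hp, rfl, rfl⟩ | ⟨p, s, i, hp, rfl, rfl⟩) <;> simp

/-- number of leading 2's -/
def leadR (x : List (SymR r)) : ℕ := leadP (fun c => c.isNone) x

def lead1 (z : W) : ℕ := leadP id z

lemma forget_length (x : List (SymR r)) : (forget x).length = x.length := by
  simp [forget]

lemma lead1_forget (x : List (SymR r)) : lead1 (forget x) = leadR x := by
  simp [lead1, leadR, leadP, forget, List.takeWhile_map, Function.comp]

lemma forget_set (x : List (SymR r)) (k : ℕ) (i : Fin r) :
    forget (x.set k (some i)) = (forget x).set k false := by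
  simp [forget, List.map_set]

lemma forget_eraseIdx (x : List (SymR r)) (k : ℕ) :
    forget (x.eraseIdx k) = (forget x).eraseIdx k := by
  rw [eraseIdx_decomp, eraseIdx_decomp]
  simp [forget, List.map_take, List.map_drop]

noncomputable def FsuccR (x : List (SymR r)) : Finset (List (SymR r)) :=
  ((Finset.range (leadR x)) ×ˢ (Finset.univ : Finset (Fin r))).image
    (fun q => x.set q.1 (some q.2)) ∪
    (if leadR x < x.length then {x.eraseIdx (leadR x)} else ∅)

noncomputable def Fsucc1 (z : W) : Finset W :=
  (Finset.range (lead1 z)).image (fun k => z.set k false) ∪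
    (if lead1 z < z.length then {z.eraseIdx (lead1 z)} else ∅)

lemma mem_FsuccR (x y : List (SymR r)) : y ∈ FsuccR x ↔ downR x y := by
  constructor
  · intro hy
    rcases Finset.mem_union.mp hy with hy | hy
    · obtain ⟨⟨k, i⟩, hmem, rfl⟩ := Finset.mem_image.mp hy
      have hk : k < leadR x := by
        have := (Finset.mem_product.mp hmem).1
        simpa using this
      have hkl : k < x.length := lt_of_lt_of_le hk (leadP_le_length _ _)
      have hknone : x[k] = none :=
        Option.isNone_iff_eq_none.mp (getElem_lt_leadP _ hk hkl)
      refine Or.inr ⟨x.take k, x.drop (k + 1), i, ?_, ?_, ?_⟩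
      · exact fun c hc => Option.isNone_iff_eq_none.mp (take_leadP_all _ hk.le c hc)
      · conv_lhs => rw [decomp_at x hkl]
        rw [hknone]
      · exact set_decomp x hkl _
    · by_cases h : leadR x < x.length
      · rw [if_pos h, Finset.mem_singleton] at hy
        subst hy
        have hne : (x[leadR x]).isNone = false := getElem_leadP (fun c : SymR r => c.isNone) (show leadP (fun c : SymR r => c.isNone) x < x.length from h)
        obtain ⟨i, hi⟩ : ∃ i, x[leadR x] = some i := by
          cases hx : x[leadR x] with
          | none => rw [hx] at hne; simp at hne
          | some i => exact ⟨i, rfl⟩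
        refine Or.inl ⟨x.take (leadR x), x.drop (leadR x + 1), i, ?_, ?_, ?_⟩
        · exact fun c hc => Option.isNone_iff_eq_none.mp (take_leadP_all _ le_rfl c hc)
        · conv_lhs => rw [decomp_at x h]
          rw [hi]
        · exact eraseIdx_decomp x _
      · rw [if_neg h] at hy; simp at hy
  · rintro (⟨p, s, i, hp, rfl, rfl⟩ | ⟨p, s, i, hp, rfl, rfl⟩)
    · have hlead : leadR (p ++ some i :: s) = p.length :=
        leadP_decomp_false _ (fun c hc => by rw [hp c hc]; rfl) rfl
      have hlen : p.length < (p ++ some i :: s).length := by simp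
      apply Finset.mem_union_right
      rw [hlead, if_pos (by omega), Finset.mem_singleton,
        List.eraseIdx_append_of_length_le le_rfl]
      simp
    · have hlead : p.length < leadR (p ++ none :: s) :=
        leadP_decomp_true _ (fun c hc => by rw [hp c hc]; rfl) rfl
      apply Finset.mem_union_left
      refine Finset.mem_image.mpr ⟨(p.length, i), ?_, ?_⟩
      · exact Finset.mem_product.mpr ⟨Finset.mem_range.mpr hlead, Finset.mem_univ _⟩
      · rw [List.set_append]
        simp
end specific
section specific2
open List

variable {r : ℕ}

lemma mem_Fsucc1 (z y : W) : y ∈ Fsucc1 z ↔ down z y := by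
  constructor
  · intro hy
    rcases Finset.mem_union.mp hy with hy | hy
    · obtain ⟨k, hmem, rfl⟩ := Finset.mem_image.mp hy
      have hk : k < lead1 z := by simpa using hmem
      have hkl : k < z.length := lt_of_lt_of_le hk (leadP_le_length _ _)
      have hktrue : z[k] = true := getElem_lt_leadP id hk hkl
      refine Or.inr ⟨z.take k, z.drop (k + 1), ?_, ?_, ?_⟩
      · exact fun c hc => take_leadP_all id hk.le c hc
      · conv_lhs => rw [decomp_at z hkl]
        rw [hktrue]
      · exact set_decomp z hkl _
    · by_cases h : lead1 z < z.length
      · rw [if_pos h, Finset.mem_singleton] at hy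
        subst hy
        have hfalse : z[lead1 z] = false :=
          getElem_leadP id (show leadP id z < z.length from h)
        refine Or.inl ⟨z.take (lead1 z), z.drop (lead1 z + 1), ?_, ?_, ?_⟩
        · exact fun c hc => take_leadP_all id le_rfl c hc
        · conv_lhs => rw [decomp_at z h]
          rw [hfalse]
        · exact eraseIdx_decomp z _
      · rw [if_neg h] at hy; simp at hy
  · rintro (⟨p, s, hp, rfl, rfl⟩ | ⟨p, s, hp, rfl, rfl⟩)
    · have hlead : lead1 (p ++ false :: s) = p.length :=
        leadP_decomp_false _ (fun c hc => by rw [hp c hc]; rfl) rfl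
      have hlen : p.length < (p ++ false :: s).length := by simp
      apply Finset.mem_union_right
      rw [hlead, if_pos (by omega), Finset.mem_singleton,
        List.eraseIdx_append_of_length_le le_rfl]
      simp
    · have hlead : p.length < lead1 (p ++ true :: s) :=
        leadP_decomp_true _ (fun c hc => by rw [hp c hc]; rfl) rfl
      apply Finset.mem_union_left
      refine Finset.mem_image.mpr ⟨p.length, Finset.mem_range.mpr hlead, ?_⟩
      rw [List.set_append]
      simp

lemma count_set_true {z : W} {k : ℕ} (hk : k < lead1 z) :
    (z.set k false).count true + 1 = z.count true := by
  have hkl : k < z.length := lt_of_lt_of_le hk (leadP_le_length _ _)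
  have hz : z[k] = true := getElem_lt_leadP id hk hkl
  conv_rhs => rw [decomp_at z hkl]
  rw [set_decomp z hkl]
  simp [List.count_append, hz]; omega

lemma count_eraseIdx_lead {z : W} (h : lead1 z < z.length) :
    (z.eraseIdx (lead1 z)).count true = z.count true := by
  have hz : z[lead1 z] = false := getElem_leadP id (show leadP id z < z.length from h)
  conv_rhs => rw [decomp_at z h]
  rw [eraseIdx_decomp]
  simp [List.count_append, hz]

lemma count_le_of_down {z y : W} (h : down z y) : y.count true ≤ z.count true := by
  rcases h with ⟨p, s, hp, rfl, rfl⟩ | ⟨p, s, hp, rfl, rfl⟩ <;>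
    simp [List.count_append]

lemma count_le_of_chain : ∀ {z : W} {L : List W}, List.Chain down z L →
    ((z :: L).getLast (List.cons_ne_nil _ _)).count true ≤ z.count true := by
  intro z L
  induction L generalizing z with
  | nil => intro _; simp
  | cons y L ih =>
    intro hc
    rw [List.Chain, List.chain_cons] at hc
    rw [List.getLast_cons (List.cons_ne_nil _ _)]
    exact le_trans (ih hc.2) (count_le_of_down hc.1)

lemma count_le_of_d1_ne {u z : W} (h : d1 u z ≠ 0) : u.count true ≤ z.count true := by
  have : Nonempty (pth down z u) := (Nat.card_ne_zero.mp h).1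
  obtain ⟨L, hc, hl⟩ := this
  have := count_le_of_chain hc
  rwa [hl] at this

/-- the fiber of `forget` over `u` -/
abbrev Fib (r : ℕ) (u : W) := {w : List (SymR r) // forget w = u}

instance (u : W) : Finite (Fib r u) := by
  have : Finite {l : List (SymR r) // l.length ≤ u.length} :=
    (List.finite_length_le _ u.length).to_subtype
  exact Finite.of_injective
    (fun w : Fib r u => (⟨w.1, by
      rw [← forget_length w.1, w.2]⟩ : {l : List (SymR r) // l.length ≤ u.length}))
    (fun a b h => by cases a; cases b; simpa [Subtype.ext_iff, Fib] using h)

instance (r : ℕ) : Unique (Fib r []) where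
  default := ⟨[], rfl⟩
  uniq := by
    rintro ⟨w, hw⟩
    have : w = [] := by simpa [forget] using hw
    simp [this]
end specific2
section claimsec
open List

variable {r : ℕ}

lemma setR_inj {x : List (SymR r)} {k k' : ℕ} {i i' : Fin r}
    (hk : k < leadR x) (hk' : k' < leadR x)
    (h : x.set k (some i) = x.set k' (some i')) : k = k' ∧ i = i' := by
  have hkl : k < x.length := lt_of_lt_of_le hk (leadP_le_length _ _)
  by_cases hkk : k = k'
  · subst hkk
    refine ⟨rfl, ?_⟩
    have h2 := List.getElem_of_eq h (show k < (x.set k (some i)).length by simpa using hkl)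
    rw [List.getElem_set_self, List.getElem_set_self] at h2
    exact Option.some.inj h2
  · exfalso
    have h2 := List.getElem_of_eq h (show k < (x.set k (some i)).length by simpa using hkl)
    rw [List.getElem_set_self, List.getElem_set_ne (fun hc => hkk hc.symm)] at h2
    have := getElem_lt_leadP (fun c : SymR r => c.isNone) hk hkl
    rw [← h2] at this
    simp at this

lemma set1_inj {z : W} {k k' : ℕ}
    (hk : k < lead1 z) (hk' : k' < lead1 z)
    (h : z.set k false = z.set k' false) : k = k' := by
  have hkl : k < z.length := lt_of_lt_of_le hk (leadP_le_length _ _)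
  by_contra hkk
  have h2 := List.getElem_of_eq h (show k < (z.set k false).length by simpa using hkl)
  rw [List.getElem_set_self, List.getElem_set_ne (fun hc => hkk hc.symm)] at h2
  have := getElem_lt_leadP id hk hkl
  rw [← h2] at this
  simp at this

theorem claimR (r : ℕ) : ∀ (n : ℕ) (x : List (SymR r)) (u : W), dsum (forget x) = n →
    Nat.card (Σ w : Fib r u, pth downR x w.1) =
      r ^ ((forget x).count true - u.count true) * d1 u (forget x) := by
  intro n
  induction n using Nat.strong_induction_on with
  | _ n IH =>
  intro x u hn
  letI : Fintype (Fib r u) := Fintype.ofFinite _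
  haveI hfin : ∀ w : Fib r u, Finite (pth downR x w.1) :=
    fun w => pth_finite downR (fun z => dsum (forget z)) hmeasR hlenR x w.1
  rw [natCard_sigma]
  by_cases hu : u = forget x
  · subst hu
    have h0 : ∀ b : Fib r (forget x), b ∈ Finset.univ → b ≠ ⟨x, rfl⟩ →
        Nat.card (pth downR x b.1) = 0 := by
      intro b _ hb
      rw [card_pth_meas_eq downR (fun z => dsum (forget z)) hmeasR (show dsum (forget b.1) = dsum (forget x) by rw [b.2]),
        if_neg (fun hc => hb (Subtype.ext hc))]
    rw [Finset.sum_eq_single_of_mem (f := fun w : Fib r (forget x) =>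
      Nat.card (pth downR x w.1)) (⟨x, rfl⟩ : Fib r (forget x)) (Finset.mem_univ _) h0]
    rw [card_pth_meas_eq downR (fun z => dsum (forget z)) hmeasR rfl, if_pos rfl]
    have hd : d1 (forget x) (forget x) = Nat.card (pth down (forget x) (forget x)) := rfl
    rw [Nat.sub_self, pow_zero, hd,
      card_pth_meas_eq down dsum hmeas1 rfl, if_pos rfl]
    simp
  · have hfx : (forget x) ≠ u := fun h => hu h.symm
    have hxw : ∀ w : Fib r u, x ≠ w.1 := fun w h => hu (by rw [← w.2, ← h])
    set cu := u.count true with hcu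
    set cx := (forget x).count true with hcx
    set n0 := leadR x with hn0
    have step1 : ∑ w : Fib r u, Nat.card (pth downR x w.1)
        = ∑ y ∈ FsuccR x, r ^ ((forget y).count true - cu) * d1 u (forget y) := by
      rw [Finset.sum_congr rfl (fun w _ =>
        card_pth_succ downR (fun z => dsum (forget z)) hmeasR hlenR (hxw w) (FsuccR x)
          (fun y => mem_FsuccR x y)), Finset.sum_comm]
      refine Finset.sum_congr rfl fun y hy => ?_
      have hdown : downR x y := (mem_FsuccR x y).mp hy
      have hd : dsum (forget y) + 1 = n := by rw [hmeasR x y hdown]; omega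
      haveI : ∀ w : Fib r u, Finite (pth downR y w.1) :=
        fun w => pth_finite downR (fun z => dsum (forget z)) hmeasR hlenR y w.1
      rw [← natCard_sigma, IH (dsum (forget y)) (by omega) y u rfl]
    rw [step1]
    have hd1 : d1 u (forget x) = ∑ z ∈ Fsucc1 (forget x), d1 u z := by
      have h0 : d1 u (forget x) = Nat.card (pth down (forget x) u) := rfl
      rw [h0, card_pth_succ down dsum hmeas1 hlen1 hfx (Fsucc1 (forget x))
        (fun z => mem_Fsucc1 (forget x) z)]
      rfl
    rw [hd1]
    -- decompose both successor sets
    have disjR : Disjoint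
        (((Finset.range n0) ×ˢ (Finset.univ : Finset (Fin r))).image
          (fun q => x.set q.1 (some q.2)))
        (if n0 < x.length then ({x.eraseIdx n0} : Finset (List (SymR r))) else ∅) := by
      rw [Finset.disjoint_left]
      intro y hyA hyB
      obtain ⟨⟨k, i⟩, _, rfl⟩ := Finset.mem_image.mp hyA
      by_cases h : n0 < x.length
      · rw [if_pos h, Finset.mem_singleton] at hyB
        have h1 : (x.set k (some i)).length = x.length := List.length_set
        have h2 : (x.eraseIdx n0).length = x.length - 1 := by
          rw [List.length_eraseIdx, if_pos h]
        rw [hyB, h2] at h1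
        omega
      · rw [if_neg h] at hyB; simp at hyB
    have disj1 : Disjoint
        ((Finset.range n0).image (fun k => (forget x).set k false))
        (if n0 < x.length then ({(forget x).eraseIdx n0} : Finset W) else ∅) := by
      rw [Finset.disjoint_left]
      intro y hyA hyB
      obtain ⟨k, _, rfl⟩ := Finset.mem_image.mp hyA
      by_cases h : n0 < x.length
      · rw [if_pos h, Finset.mem_singleton] at hyB
        have h1 : ((forget x).set k false).length = (forget x).length :=
          List.length_set
        have h2 : ((forget x).eraseIdx n0).length = (forget x).length - 1 := by
          rw [List.length_eraseIdx,
            if_pos (show n0 < (forget x).length by rw [forget_length]; exact h)]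
        rw [hyB, h2, forget_length] at h1
        omega
      · rw [if_neg h] at hyB; simp at hyB
    have hsucc1 : Fsucc1 (forget x) =
        (Finset.range n0).image (fun k => (forget x).set k false) ∪
          (if n0 < x.length then ({(forget x).eraseIdx n0} : Finset W) else ∅) := by
      rw [Fsucc1, lead1_forget, forget_length]
    rw [hsucc1, Finset.sum_union disj1,
      Finset.sum_image (fun a ha b hb h =>
        set1_inj (by rw [lead1_forget]; simpa using ha)
          (by rw [lead1_forget]; simpa using hb) h)]
    rw [FsuccR, Finset.sum_union disjR,
      Finset.sum_image (fun a ha b hb h => by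
        have h1 := (Finset.mem_product.mp ha).1
        have h2 := (Finset.mem_product.mp hb).1
        have := setR_inj (by simpa using h1) (by simpa using h2) h
        exact Prod.ext this.1 this.2)]
    rw [Finset.sum_product]
    rw [mul_add, Finset.mul_sum]
    congr 1
    · refine Finset.sum_congr rfl fun k hk => ?_
      have hkn0 : k < n0 := by simpa using hk
      have hkl1 : k < lead1 (forget x) := by rw [lead1_forget]; exact hkn0
      simp only [forget_set]
      rw [Finset.sum_const, Finset.card_univ, Fintype.card_fin, smul_eq_mul]
      set zk := (forget x).set k false with hzk
      have hczk : zk.count true + 1 = cx := count_set_true hkl1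
      by_cases hz : d1 u zk = 0
      · simp [hz]
      · have hcule : cu ≤ zk.count true := count_le_of_d1_ne hz
        have hexp : cx - cu = (zk.count true - cu) + 1 := by omega
        rw [hexp, pow_succ]
        ring
    · by_cases h : n0 < x.length
      · rw [if_pos h, if_pos h, Finset.sum_singleton, Finset.sum_singleton]
        rw [forget_eraseIdx]
        have hcz : ((forget x).eraseIdx n0).count true = cx := by
          have := count_eraseIdx_lead (z := forget x)
            (by rw [lead1_forget, forget_length]; exact h)
          rwa [lead1_forget] at this
        rw [hcz]
      · rw [if_neg h, if_neg h]
        simp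
end claimsec
section finalsec
open List

variable {r : ℕ}

lemma cor_dR_nil (r : ℕ) (x : List (SymR r)) :
    dR [] x = r ^ ((forget x).count true) * d1 [] (forget x) := by
  have hc := claimR r (dsum (forget x)) x [] rfl
  letI : Fintype (Fib r []) := Fintype.ofFinite _
  haveI : ∀ w : Fib r [], Finite (pth downR x w.1) :=
    fun w => pth_finite downR (fun z => dsum (forget z)) hmeasR hlenR x w.1
  rw [natCard_sigma, Fintype.sum_unique] at hc
  have h0 : (default : Fib r []).1 = ([] : List (SymR r)) := rfl
  rw [h0] at hc
  simp at hc
  exact hc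

lemma sum_fib_dR (r : ℕ) (u : W) (x : List (SymR r)) [Fintype (Fib r u)] :
    ∑ w : Fib r u, dR w.1 x =
      r ^ ((forget x).count true - u.count true) * d1 u (forget x) := by
  have hc := claimR r (dsum (forget x)) x u rfl
  haveI : ∀ w : Fib r u, Finite (pth downR x w.1) :=
    fun w => pth_finite downR (fun z => dsum (forget z)) hmeasR hlenR x w.1
  rw [natCard_sigma] at hc
  exact hc

lemma d1_ne_count_le {u z : W} (h : d1 u z ≠ 0) : u.count true ≤ z.count true :=
  count_le_of_d1_ne h

lemma ratio_eq (r : ℕ) (hr : 0 < r) (u : W) (x : List (SymR r)) [Fintype (Fib r u)] :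
    ∑ w : Fib r u, ((dR [] w.1 : ℝ) * (dR w.1 x : ℝ) / (dR [] x : ℝ)) =
      (d1 [] u : ℝ) * (d1 u (forget x) : ℝ) / (d1 [] (forget x) : ℝ) := by
  set cu := u.count true with hcu
  set cx := (forget x).count true with hcx
  have hw : ∀ w : Fib r u, dR [] w.1 = r ^ cu * d1 [] u := by
    intro w
    rw [cor_dR_nil r w.1, w.2]
  have hx : dR [] x = r ^ cx * d1 [] (forget x) := cor_dR_nil r x
  have hsum : ∑ w : Fib r u, dR w.1 x = r ^ (cx - cu) * d1 u (forget x) :=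
    sum_fib_dR r u x
  rw [← Finset.sum_div]
  have hnum : ∑ w : Fib r u, ((dR [] w.1 : ℝ) * (dR w.1 x : ℝ))
      = ((r : ℝ) ^ cu * (d1 [] u : ℝ)) * ((r : ℝ) ^ (cx - cu) * (d1 u (forget x) : ℝ)) := by
    have hterm : ∀ w : Fib r u, ((dR [] w.1 : ℝ) * (dR w.1 x : ℝ))
        = ((r : ℝ) ^ cu * (d1 [] u : ℝ)) * (dR w.1 x : ℝ) := by
      intro w
      rw [hw w]
      push_cast
      ring
    rw [Finset.sum_congr rfl (fun w _ => hterm w), ← Finset.mul_sum, ← Nat.cast_sum, hsum]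
    push_cast
    ring
  rw [hnum, hx]
  by_cases hcle : cu ≤ cx
  · have hpow : (r : ℝ) ^ cu * (r : ℝ) ^ (cx - cu) = (r : ℝ) ^ cx := by
      rw [← pow_add]
      congr 1
      omega
    push_cast
    rw [show ((r:ℝ) ^ cu * (d1 [] u : ℝ)) * ((r:ℝ) ^ (cx - cu) * (d1 u (forget x) : ℝ))
        = (r:ℝ) ^ cx * ((d1 [] u : ℝ) * (d1 u (forget x) : ℝ)) by rw [← hpow]; ring]
    exact mul_div_mul_left _ _ (by positivity)
  · have hz : d1 u (forget x) = 0 := by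
      by_contra hne
      exact hcle (d1_ne_count_le hne)
    rw [hz]
    push_cast
    simp

lemma length_le_dsum (z : W) : z.length ≤ dsum z := by
  induction z with
  | nil => simp [dsum]
  | cons c t ih =>
    simp only [dsum, List.map_cons, List.sum_cons, List.length_cons] at *
    cases c <;> simp <;> omega

lemma finite_badR (r m : ℕ) (Q : W → Prop) :
    Finite {w : List (SymR r) // dsum (forget w) = m ∧ Q (forget w)} := by
  have : Finite {l : List (SymR r) // l.length ≤ m} :=
    (List.finite_length_le _ m).to_subtype
  refine Finite.of_injective (fun w : {w : List (SymR r) // dsum (forget w) = m ∧ Q (forget w)} =>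
    (⟨w.1, ?_⟩ : {l : List (SymR r) // l.length ≤ m})) ?_
  · have h1 : (forget w.1).length ≤ m := le_of_le_of_eq (length_le_dsum (forget w.1)) w.2.1
    rwa [forget_length] at h1
  · intro a b h
    cases a; cases b; simpa [Subtype.ext_iff] using h
  -- note: order of goals may differ

lemma finite_bad1 (m : ℕ) (Q : W → Prop) :
    Finite {u : W // dsum u = m ∧ Q u} := by
  have : Finite {l : W // l.length ≤ m} := (List.finite_length_le _ m).to_subtype
  refine Finite.of_injective (fun u : {u : W // dsum u = m ∧ Q u} =>
    (⟨u.1, ?_⟩ : {l : W // l.length ≤ m})) ?_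
  · exact le_of_le_of_eq (length_le_dsum u.1) u.2.1
  · intro a b h
    cases a; cases b; simpa [Subtype.ext_iff] using h

def badEquiv (r : ℕ) (Q : W → Prop) :
    {w : List (SymR r) // Q (forget w)} ≃ Σ u : {u : W // Q u}, Fib r u.1 where
  toFun w := ⟨⟨forget w.1, w.2⟩, ⟨w.1, rfl⟩⟩
  invFun p := ⟨p.2.1, by rw [p.2.2]; exact p.1.2⟩
  left_inv w := rfl
  right_inv p := by
    obtain ⟨⟨u, hu⟩, w, hw⟩ := p
    have hw' : forget w = u := hw
    subst hw'
    rfl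

end finalsec
open Classical in
/-- Concentration of the Martin-boundary measures of `YF^r` (`r ≥ 2`): the total
`μ_{r,v,β}`-mass of the vertices `w` of digit sum `m` with
`π(w) ∉ (π(v)(β-ε), π(v)(β+ε))` tends to `0` as `m → ∞`, given the corresponding
one-dimensional statement for `r = 1`. -/
theorem stmt18 (r : ℕ) (hr : 2 ≤ r) (v : ℕ → SymR r)
    (hv : 0 < piInf (fun n => (v n).isNone)) (β : ℝ) (hβ : β ∈ Set.Ioc (0 : ℝ) 1)
    (ε : ℝ) (hε : 0 < ε)
    (vs : ℕ → List (SymR r))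
    (hconv : ∀ j : ℕ, ∀ᶠ n in atTop, (vs n).reverse[j]? = some (v j))
    (hpi : Tendsto (fun n => piW (forget (vs n))) atTop
      (nhds (β * piInf (fun n => (v n).isNone))))
    (μr : List (SymR r) → ℝ) (μ1 : W → ℝ)
    (hμr : ∀ w : List (SymR r),
      Tendsto (fun n => (dR [] w : ℝ) * (dR w (vs n) : ℝ) / (dR [] (vs n) : ℝ)) atTop (nhds (μr w)))
    (hμ1 : ∀ u : W,
      Tendsto (fun n => (d1 [] u : ℝ) * (d1 u (forget (vs n)) : ℝ) / (d1 [] (forget (vs n)) : ℝ))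
        atTop (nhds (μ1 u)))
    (h1 : Tendsto
      (fun m => ∑' u : {u : W // dsum u = m ∧
        piW u ∉ Set.Ioo (piInf (fun n => (v n).isNone) * (β - ε))
          (piInf (fun n => (v n).isNone) * (β + ε))}, μ1 u.1)
      atTop (nhds 0)) :
    Tendsto
      (fun m => ∑' w : {w : List (SymR r) // dsum (forget w) = m ∧
        piW (forget w) ∉ Set.Ioo (piInf (fun n => (v n).isNone) * (β - ε))
          (piInf (fun n => (v n).isNone) * (β + ε))}, μr w.1)
      atTop (nhds 0) := by
  have hr0 : 0 < r := by omega
  letI instFib : ∀ u : W, Fintype (Fib r u) := fun u => Fintype.ofFinite _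
  have key : ∀ u : W, ∑ w : Fib r u, μr w.1 = μ1 u := by
    intro u
    have t1 := tendsto_finset_sum (f := fun (w : Fib r u) n =>
      (dR [] w.1 : ℝ) * (dR w.1 (vs n) : ℝ) / (dR [] (vs n) : ℝ)) (x := atTop)
      (a := fun w => μr w.1) Finset.univ (fun w _ => hμr w.1)
    have t2 : (fun n => ∑ w : Fib r u,
        ((dR [] w.1 : ℝ) * (dR w.1 (vs n) : ℝ) / (dR [] (vs n) : ℝ)))
        = fun n => (d1 [] u : ℝ) * (d1 u (forget (vs n)) : ℝ) / (d1 [] (forget (vs n)) : ℝ) :=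
      funext fun n => ratio_eq r hr0 u (vs n)
    rw [t2] at t1
    exact tendsto_nhds_unique t1 (hμ1 u)
  have hfun : ∀ m : ℕ,
      (∑' w : {w : List (SymR r) // dsum (forget w) = m ∧
        piW (forget w) ∉ Set.Ioo (piInf (fun n => (v n).isNone) * (β - ε))
          (piInf (fun n => (v n).isNone) * (β + ε))}, μr w.1)
      = ∑' u : {u : W // dsum u = m ∧
        piW u ∉ Set.Ioo (piInf (fun n => (v n).isNone) * (β - ε))
          (piInf (fun n => (v n).isNone) * (β + ε))}, μ1 u.1 := by
    intro m
    haveI h1f : Finite {w : List (SymR r) // dsum (forget w) = m ∧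
        piW (forget w) ∉ Set.Ioo (piInf (fun n => (v n).isNone) * (β - ε))
          (piInf (fun n => (v n).isNone) * (β + ε))} :=
      finite_badR r m (fun z => piW z ∉ Set.Ioo (piInf (fun n => (v n).isNone) * (β - ε))
          (piInf (fun n => (v n).isNone) * (β + ε)))
    haveI h2f : Finite {u : W // dsum u = m ∧
        piW u ∉ Set.Ioo (piInf (fun n => (v n).isNone) * (β - ε))
          (piInf (fun n => (v n).isNone) * (β + ε))} :=
      finite_bad1 m _
    letI := Fintype.ofFinite {w : List (SymR r) // dsum (forget w) = m ∧
        piW (forget w) ∉ Set.Ioo (piInf (fun n => (v n).isNone) * (β - ε))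
          (piInf (fun n => (v n).isNone) * (β + ε))}
    letI := Fintype.ofFinite {u : W // dsum u = m ∧
        piW u ∉ Set.Ioo (piInf (fun n => (v n).isNone) * (β - ε))
          (piInf (fun n => (v n).isNone) * (β + ε))}
    rw [tsum_fintype, tsum_fintype]
    rw [Fintype.sum_equiv (badEquiv r (fun z => dsum z = m ∧
        piW z ∉ Set.Ioo (piInf (fun n => (v n).isNone) * (β - ε))
          (piInf (fun n => (v n).isNone) * (β + ε))))
      (fun w => μr w.1) (fun p => μr p.2.1) (fun w => rfl)]
    rw [← Finset.univ_sigma_univ, Finset.sum_sigma]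
    exact Finset.sum_congr rfl fun u _ => key u.1
  have heq : (fun m => ∑' w : {w : List (SymR r) // dsum (forget w) = m ∧
        piW (forget w) ∉ Set.Ioo (piInf (fun n => (v n).isNone) * (β - ε))
          (piInf (fun n => (v n).isNone) * (β + ε))}, μr w.1)
      = fun m => ∑' u : {u : W // dsum u = m ∧
        piW u ∉ Set.Ioo (piInf (fun n => (v n).isNone) * (β - ε))
          (piInf (fun n => (v n).isNone) * (β + ε))}, μ1 u.1 := funext hfun
  rw [heq]
  exact h1
end
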